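/- Let m ≥ 2 and let (a,b) ∈ F_{2^m} × F_{2^m} with (a,b) ≠ (0,0). Then the weight wt(c(a,b)) = #{(x,y) ∈ D_1 : Tr(axy + bx) = 1} satisfies: wt(c(a,b)) = 2^{2m−2} if a = 0, b ≠ 0 and Tr(b) = 0, or if a ∉ Υ1 ∪ {0}, or if a ∈ Υ1, b ≠ 0 and Tr(ab) = 1; otherwise wt(c(a,b)) ∈ {2^{m−1}(2^{m−1} − 1), 2^{m−1}(2^{m−1} + 1)}. -/

import Mathlib

attribute [local instance] Classical.propDecidable

noncomputable instance (m : ℕ) : Fintype (GaloisField 2 m) := Fintype.ofFinite _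

/-- The absolute trace map from `F_{2^m}` to `F_2`. -/
noncomputable def Tr (m : ℕ) (x : GaloisField 2 m) : ZMod 2 :=
  Algebra.trace (ZMod 2) (GaloisField 2 m) x

/-- For `t ∈ F_2`, `sgn t` is the integer `(-1)^t`. -/
def sgn : ZMod 2 → ℤ := fun t => if t = 0 then 1 else -1

/-- The set `Υ₁ = {r + r⁻¹ : r ∈ F_{2^m}^*, r ≠ 1}`. -/
def Ups1 (m : ℕ) : Set (GaloisField 2 m) :=
  {u | ∃ r : GaloisField 2 m, r ≠ 0 ∧ r ≠ 1 ∧ u = r + r⁻¹}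

/-!
Write `Tr(y x² + y) = Tr(y u)` and `Tr(a x y + b x) = Tr(y v) + Tr(b x)` with `u = x² + 1` and
`v = a x`: the weight is a sum over the columns `x` of the number of `y` solving two affine
equations in the `F₂`-linear forms `y ↦ Tr(y u)` and `y ↦ Tr(y v)`. Such a form is onto `F₂` when
its coefficient is nonzero, so a column has `2^{m-2}` solutions when `u`, `v` and `u + v` are
nonzero, and `2^{m-1}` or `0` solutions, according to `Tr(b x)`, when `u ≠ 0` and `v ∈ {0, u}`;
the column `x = 1` (where `u = 0`) has `2^{m-1}` solutions if `a ≠ 0`.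

For `a ≠ 0`, `v = u` means `a = x + x⁻¹`: no column does this if `a ∉ Υ₁`, and exactly `x = r` and
`x = r⁻¹` do if `a = r + r⁻¹`; then `Tr(b r) + Tr(b r⁻¹) = Tr(a b)` decides the weight. For `a = 0`
every column other than `x = 1` is of the second kind, and the weight is read off the hyperplane
`Tr(b x) = 1`.
-/

open Finset

theorem ZMod.eq_zero_or_eq_one (s : ZMod 2) : s = 0 ∨ s = 1 := by
  fin_cases s
  · exact .inl rfl
  · exact .inr rfl

theorem Finset.card_filter_eq_zero_add_card_filter_eq_one {α : Type*} (s : Finset α)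
    (h : α → ZMod 2) : #{x ∈ s | h x = 0} + #{x ∈ s | h x = 1} = #s := by
  rw [← card_filter_add_card_filter_not (s := s) (fun x => h x = 0)]
  exact congrArg _ (congrArg card (filter_congr fun x _ =>
    ⟨fun hx => hx ▸ one_ne_zero, (h x).eq_zero_or_eq_one.resolve_left⟩))

section FiberCount

variable {G : Type*} [AddGroup G] [Fintype G]

theorem AddMonoidHom.card_fiber_mul_card_of_surjective {H : Type*} [AddMonoid H] [Fintype H]
    {f : G →+ H} (hf : Function.Surjective f) (y : H) :
    #{x | f x = y} * Fintype.card H = Fintype.card G := by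
  calc #{x | f x = y} * Fintype.card H = ∑ z : H, #{x | f x = z} := by
        rw [sum_congr rfl fun z _ => card_fiber_eq_of_mem_range f (hf z) (hf y), sum_const,
          card_univ, smul_eq_mul, mul_comm]
    _ = Fintype.card G := by
        rw [← card_univ, card_eq_sum_card_fiberwise (f := f) (t := univ) (by simp)]

theorem AddMonoidHom.card_fiber_mul_two {f : G →+ ZMod 2} (hf : Function.Surjective f)
    (s : ZMod 2) : #{x | f x = s} * 2 = Fintype.card G := by
  convert f.card_fiber_mul_card_of_surjective hf s
  exact (ZMod.card 2).symm

theorem AddMonoidHom.card_fiber_pair_mul_four {f g : G →+ ZMod 2} (hf : Function.Surjective f)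
    (hg : Function.Surjective g) (hfg : Function.Surjective (f + g)) (s t : ZMod 2) :
    #{x | f x = s ∧ g x = t} * 4 = Fintype.card G := by
  -- The four counts `c s t` are pinned down by their row, column and diagonal sums.
  set c : ZMod 2 → ZMod 2 → ℕ := fun s t => #{x | f x = s ∧ g x = t} with hc
  change c s t * 4 = _
  have row (s : ZMod 2) : (c s 0 + c s 1) * 2 = Fintype.card G := by
    simp only [hc, ← filter_filter, card_filter_eq_zero_add_card_filter_eq_one]
    exact f.card_fiber_mul_two hf s
  have col (t : ZMod 2) : (c 0 t + c 1 t) * 2 = Fintype.card G := by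
    simp only [hc, and_comm (a := f _ = _), ← filter_filter,
      card_filter_eq_zero_add_card_filter_eq_one]
    exact g.card_fiber_mul_two hg t
  have diag : (c 0 0 + c 1 1) * 2 = Fintype.card G := by
    rw [← (f + g).card_fiber_mul_two hfg 0, hc, ← card_union_of_disjoint]
    · congr 2
      ext x
      simp only [mem_union, mem_filter, mem_univ, true_and, AddMonoidHom.add_apply]
      rcases (f x).eq_zero_or_eq_one with h | h <;>
        rcases (g x).eq_zero_or_eq_one with h' | h' <;> simp [h, h', CharTwo.add_self_eq_zero]
    · exact disjoint_filter.2 fun x _ h h' => zero_ne_one (h.1.symm.trans h'.1)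
  have := row 0; have := row 1; have := col 0; have := col 1
  rcases s.eq_zero_or_eq_one with rfl | rfl <;>
    rcases t.eq_zero_or_eq_one with rfl | rfl <;> omega

end FiberCount

section CharTwoField

variable {K : Type*} [Field K]

theorem add_inv_eq_add_inv_iff {x r : K} (hx : x ≠ 0) (hr : r ≠ 0) :
    x + x⁻¹ = r + r⁻¹ ↔ x = r ∨ x = r⁻¹ := by
  have key : x + x⁻¹ - (r + r⁻¹) = (x - r) * (x * r - 1) / (x * r) := by
    field_simp
    ring
  rw [← sub_eq_zero, key, div_eq_zero_iff, mul_eq_zero, mul_eq_zero, sub_eq_zero, sub_eq_zero,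
    mul_eq_one_iff_eq_inv₀ hr]
  simp [hx, hr]

theorem mul_eq_sq_add_one_iff {a x : K} (hx : x ≠ 0) : a * x = x ^ 2 + 1 ↔ a = x + x⁻¹ := by
  rw [← eq_div_iff hx]
  field_simp

variable [CharP K 2]

theorem sq_add_one_ne_zero {x : K} (hx : x ≠ 1) : x ^ 2 + 1 ≠ 0 := by
  rwa [Ne, CharTwo.add_eq_zero, ← one_pow 2, CharTwo.sq_inj]

theorem inv_ne_self_of_ne_one {r : K} (hr0 : r ≠ 0) (hr1 : r ≠ 1) : r⁻¹ ≠ r := by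
  intro h
  apply sq_add_one_ne_zero hr1
  rw [CharTwo.add_eq_zero, sq]
  nth_rw 1 [← h]
  exact inv_mul_cancel₀ hr0

theorem add_inv_ne_zero {r : K} (hr0 : r ≠ 0) (hr1 : r ≠ 1) : r + r⁻¹ ≠ 0 :=
  fun h => inv_ne_self_of_ne_one hr0 hr1 (CharTwo.add_eq_zero.1 h).symm

end CharTwoField

section Trace

variable {m : ℕ}

theorem Tr_add (x y : GaloisField 2 m) : Tr m (x + y) = Tr m x + Tr m y := map_add _ x y

theorem Tr_zero : Tr m 0 = 0 := map_zero _

theorem ne_zero_of_Tr_mul_eq_one {a b : GaloisField 2 m} (h : Tr m (a * b) = 1) :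
    b ≠ 0 := by
  rintro rfl
  simp [Tr_zero] at h

theorem card_galoisField_two (hm : m ≠ 0) : Fintype.card (GaloisField 2 m) = 2 ^ m := by
  rw [← Nat.card_eq_fintype_card, GaloisField.card 2 m hm]

noncomputable def traceMul (m : ℕ) (u : GaloisField 2 m) : GaloisField 2 m →+ ZMod 2 :=
  (Algebra.trace (ZMod 2) (GaloisField 2 m)).toAddMonoidHom.comp (AddMonoidHom.mulRight u)

theorem traceMul_apply (u y : GaloisField 2 m) : traceMul m u y = Tr m (y * u) := rfl

theorem traceMul_add (u v : GaloisField 2 m) :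
    traceMul m (u + v) = traceMul m u + traceMul m v := by
  ext y
  simp only [traceMul_apply, AddMonoidHom.add_apply, mul_add, Tr_add]

theorem traceMul_surjective {u : GaloisField 2 m} (hu : u ≠ 0) :
    Function.Surjective (traceMul m u) := by
  intro s
  obtain ⟨z, hz⟩ := Algebra.trace_surjective (ZMod 2) (GaloisField 2 m) s
  exact ⟨z * u⁻¹, by rw [traceMul_apply, inv_mul_cancel_right₀ hu]; exact hz⟩

theorem card_Tr_mul_eq (hm : m ≠ 0) {u : GaloisField 2 m} (hu : u ≠ 0) (s : ZMod 2) :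
    #{y | Tr m (y * u) = s} = 2 ^ (m - 1) := by
  have h := (traceMul m u).card_fiber_mul_two (traceMul_surjective hu) s
  rw [card_galoisField_two hm, ← pow_sub_one_mul hm] at h
  exact Nat.eq_of_mul_eq_mul_right two_pos h

theorem card_Tr_mul_pair_eq (hm : 2 ≤ m) {u v : GaloisField 2 m} (hu : u ≠ 0) (hv : v ≠ 0)
    (huv : u ≠ v) (s t : ZMod 2) :
    #{y | Tr m (y * u) = s ∧ Tr m (y * v) = t} = 2 ^ (m - 2) := by
  have huv' : Function.Surjective (traceMul m u + traceMul m v) := by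
    rw [← traceMul_add]
    exact traceMul_surjective fun h => huv (CharTwo.add_eq_zero.1 h)
  have h := (traceMul m u).card_fiber_pair_mul_four (traceMul_surjective hu)
    (traceMul_surjective hv) huv' s t
  rw [card_galoisField_two (by omega), ← pow_sub_mul_pow 2 hm] at h
  exact Nat.eq_of_mul_eq_mul_right (by norm_num) h

end Trace

section Weight

variable {m : ℕ}

noncomputable def weight (m : ℕ) (a b : GaloisField 2 m) : ℕ :=
  #{p : GaloisField 2 m × GaloisField 2 m | p.1 ≠ 0 ∧ Tr m (p.2 * p.1 ^ 2 + p.2) = 0 ∧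
    Tr m (a * p.1 * p.2 + b * p.1) = 1}

noncomputable def columnWeight (m : ℕ) (a b x : GaloisField 2 m) : ℕ :=
  #{y | Tr m (y * (x ^ 2 + 1)) = 0 ∧ Tr m (y * (a * x)) = 1 + Tr m (b * x)}

theorem weight_eq_sum_columnWeight (a b : GaloisField 2 m) :
    weight m a b = ∑ x, columnWeight m a b x := by
  simp only [weight, columnWeight, card_filter, Fintype.sum_prod_type]
  refine sum_congr rfl fun x _ => sum_congr rfl fun y _ => if_congr ?_ rfl rfl
  rw [show y * x ^ 2 + y = y * (x ^ 2 + 1) by ring,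
    show a * x * y + b * x = y * (a * x) + b * x by ring, Tr_add, CharTwo.add_eq_iff_eq_add]
  refine ⟨fun h => h.2, fun h => ⟨?_, h⟩⟩
  -- in the column `x = 0` the second condition reads `0 = 1`
  rintro rfl
  simp [Tr_zero] at h

theorem columnWeight_zero_right (a b : GaloisField 2 m) : columnWeight m a b 0 = 0 := by
  simp [columnWeight, Tr_zero]

theorem columnWeight_of_degenerate (hm : m ≠ 0) {a b x : GaloisField 2 m} (hx : x ≠ 1)
    (hax : a * x = 0 ∨ a * x = x ^ 2 + 1) :
    columnWeight m a b x = if Tr m (b * x) = 1 then 2 ^ (m - 1) else 0 := by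
  have hv (y) (hy : Tr m (y * (x ^ 2 + 1)) = 0) : Tr m (y * (a * x)) = 0 := by
    rcases hax with h | h <;> rw [h]
    · rw [mul_zero, Tr_zero]
    · exact hy
  rw [columnWeight]
  rcases (Tr m (b * x)).eq_zero_or_eq_one with h | h
  · rw [if_neg (by simp [h]), filter_false_of_mem]
    · rfl
    · rintro y - ⟨hy, hy'⟩
      simp [hv y hy, h] at hy'
  · rw [if_pos h, ← card_Tr_mul_eq hm (sq_add_one_ne_zero hx) 0]
    congr 1
    refine filter_congr fun y _ => ⟨And.left, fun hy => ⟨hy, ?_⟩⟩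
    rw [hv y hy, h, CharTwo.add_self_eq_zero]

theorem columnWeight_of_generic (hm : 2 ≤ m) {a b x : GaloisField 2 m} (hx : x ≠ 1)
    (hax : a * x ≠ 0) (hax' : a * x ≠ x ^ 2 + 1) : columnWeight m a b x = 2 ^ (m - 2) :=
  card_Tr_mul_pair_eq hm (sq_add_one_ne_zero hx) hax (Ne.symm hax') _ _

theorem columnWeight_one (hm : m ≠ 0) {a : GaloisField 2 m} (ha : a ≠ 0) (b : GaloisField 2 m) :
    columnWeight m a b 1 = 2 ^ (m - 1) := by
  rw [← card_Tr_mul_eq hm ha (1 + Tr m b), columnWeight]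
  simp [Tr_zero, CharTwo.add_self_eq_zero]

theorem columnWeight_zero_left_one (hm : m ≠ 0) (b : GaloisField 2 m) :
    columnWeight m 0 b 1 = if Tr m b = 1 then 2 ^ m else 0 := by
  rcases (Tr m b).eq_zero_or_eq_one with h | h
  · simp [columnWeight, h, Tr_zero]
  · simp [columnWeight, Tr_zero, h, CharTwo.add_self_eq_zero, card_galoisField_two hm]

theorem weight_add_card_mul (hm : 2 ≤ m) {a : GaloisField 2 m} (b : GaloisField 2 m)
    (T : Finset (GaloisField 2 m)) (hT : ∀ x ∉ T, x ≠ 1 ∧ a * x ≠ 0 ∧ a * x ≠ x ^ 2 + 1) :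
    weight m a b + #T * 2 ^ (m - 2) =
      ∑ x ∈ T, columnWeight m a b x + 2 ^ (m - 1) * 2 ^ (m - 1) := by
  have hgen (x) (hx : x ∈ Tᶜ) : columnWeight m a b x = 2 ^ (m - 2) :=
    let ⟨hx1, hax, hax'⟩ := hT x (mem_compl.1 hx)
    columnWeight_of_generic hm hx1 hax hax'
  rw [weight_eq_sum_columnWeight, ← sum_add_sum_compl T, sum_congr rfl hgen, sum_const,
    smul_eq_mul, add_assoc, ← add_mul, card_compl_add_card, card_galoisField_two (by omega),
    ← pow_add, ← pow_add]
  congr 2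
  omega

theorem weight_zero_left (hm : m ≠ 0) {b : GaloisField 2 m} (hb : b ≠ 0) :
    weight m 0 b = 2 ^ (m - 1) * 2 ^ (m - 1) + if Tr m b = 1 then 2 ^ (m - 1) else 0 := by
  set g : GaloisField 2 m → ℕ := fun x => if Tr m (b * x) = 1 then 2 ^ (m - 1) else 0 with hg
  have hcol (x : GaloisField 2 m) (hx : x ≠ 1) : columnWeight m 0 b x = g x :=
    columnWeight_of_degenerate hm hx (.inl (zero_mul x))
  have hcol_one : columnWeight m 0 b 1 = g 1 + g 1 := by
    simp only [columnWeight_zero_left_one hm, hg, mul_one, ← pow_sub_one_mul hm]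
    split_ifs <;> ring
  have hsum : ∑ x, g x = 2 ^ (m - 1) * 2 ^ (m - 1) := by
    rw [hg, sum_ite, sum_const, sum_const_zero, add_zero, smul_eq_mul]
    simp_rw [mul_comm b]
    rw [card_Tr_mul_eq hm hb 1]
  rw [weight_eq_sum_columnWeight, ← add_sum_erase _ _ (mem_univ 1),
    sum_congr rfl fun x hx => hcol x (ne_of_mem_erase hx), hcol_one, add_assoc,
    add_sum_erase _ _ (mem_univ 1), hsum, add_comm]
  simp only [hg, mul_one]

theorem weight_of_notMem_Ups1 (hm : 2 ≤ m) {a : GaloisField 2 m} (ha0 : a ≠ 0)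
    (ha : a ∉ Ups1 m) (b : GaloisField 2 m) : weight m a b = 2 ^ (m - 1) * 2 ^ (m - 1) := by
  have hT (x) (hx : x ∉ ({0, 1} : Finset (GaloisField 2 m))) :
      x ≠ 1 ∧ a * x ≠ 0 ∧ a * x ≠ x ^ 2 + 1 := by
    simp only [mem_insert, mem_singleton, not_or] at hx
    refine ⟨hx.2, mul_ne_zero ha0 hx.1, fun h => ha ⟨x, hx.1, hx.2, ?_⟩⟩
    exact (mul_eq_sq_add_one_iff hx.1).1 h
  have key := weight_add_card_mul hm b _ hT
  rw [card_pair zero_ne_one, sum_pair zero_ne_one, columnWeight_zero_right,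
    columnWeight_one (by omega) ha0] at key
  have hP : 2 ^ (m - 2) * 2 = 2 ^ (m - 1) := by rw [← pow_succ]; congr 1; omega
  omega

-- `2 ^ (m - 1)` is added on the left to avoid a truncated subtraction.
theorem weight_add_inv (hm : 2 ≤ m) {r : GaloisField 2 m} (hr0 : r ≠ 0) (hr1 : r ≠ 1)
    (b : GaloisField 2 m) :
    weight m (r + r⁻¹) b + 2 ^ (m - 1) = 2 ^ (m - 1) * 2 ^ (m - 1) +
      (if Tr m (b * r) = 1 then 2 ^ (m - 1) else 0) +
      (if Tr m (b * r⁻¹) = 1 then 2 ^ (m - 1) else 0) := by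
  have hr0' : r⁻¹ ≠ 0 := inv_ne_zero hr0
  have hr1' : r⁻¹ ≠ 1 := inv_ne_one.2 hr1
  have hrr : r⁻¹ ≠ r := inv_ne_self_of_ne_one hr0 hr1
  set T : Finset (GaloisField 2 m) := {0, 1, r, r⁻¹}
  have hT (x) (hx : x ∉ T) : x ≠ 1 ∧ (r + r⁻¹) * x ≠ 0 ∧ (r + r⁻¹) * x ≠ x ^ 2 + 1 := by
    simp only [T, mem_insert, mem_singleton, not_or] at hx
    obtain ⟨hx0, hx1, hxr, hxr'⟩ := hx
    refine ⟨hx1, mul_ne_zero (add_inv_ne_zero hr0 hr1) hx0, fun h => ?_⟩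
    rw [mul_eq_sq_add_one_iff hx0, eq_comm, add_inv_eq_add_inv_iff hx0 hr0] at h
    exact h.elim hxr hxr'
  have h0 : (0 : GaloisField 2 m) ∉ ({1, r, r⁻¹} : Finset _) := by
    simp [hr0.symm, hr0'.symm]
  have h1 : (1 : GaloisField 2 m) ∉ ({r, r⁻¹} : Finset _) := by
    simp [hr1.symm, hr1'.symm]
  have hT4 : #T = 4 := by
    rw [card_insert_of_notMem h0, card_insert_of_notMem h1, card_pair hrr.symm]
  have hcol_r : columnWeight m (r + r⁻¹) b r = if Tr m (b * r) = 1 then 2 ^ (m - 1) else 0 :=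
    columnWeight_of_degenerate (by omega) hr1 (.inr ((mul_eq_sq_add_one_iff hr0).2 rfl))
  have hcol_r' :
      columnWeight m (r + r⁻¹) b r⁻¹ = if Tr m (b * r⁻¹) = 1 then 2 ^ (m - 1) else 0 :=
    columnWeight_of_degenerate (by omega) hr1'
      (.inr ((mul_eq_sq_add_one_iff hr0').2 (by rw [inv_inv, add_comm])))
  have hsum : ∑ x ∈ T, columnWeight m (r + r⁻¹) b x = 2 ^ (m - 1) +
      ((if Tr m (b * r) = 1 then 2 ^ (m - 1) else 0) +
        (if Tr m (b * r⁻¹) = 1 then 2 ^ (m - 1) else 0)) := by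
    rw [sum_insert h0, sum_insert h1, sum_pair hrr.symm, columnWeight_zero_right,
      columnWeight_one (by omega) (add_inv_ne_zero hr0 hr1), hcol_r, hcol_r', zero_add]
  have key := weight_add_card_mul hm b T hT
  rw [hT4, hsum] at key
  have hP : 2 ^ (m - 2) * 2 = 2 ^ (m - 1) := by rw [← pow_succ]; congr 1; omega
  omega

theorem zero_notMem_Ups1 : (0 : GaloisField 2 m) ∉ Ups1 m :=
  fun ⟨_, hr0, hr1, h⟩ => add_inv_ne_zero hr0 hr1 h.symm

theorem Tr_add_inv_mul (r b : GaloisField 2 m) :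
    Tr m ((r + r⁻¹) * b) = Tr m (b * r) + Tr m (b * r⁻¹) := by
  rw [← Tr_add]
  ring_nf

theorem weight_of_mem_Ups1_of_Tr_eq_one (hm : 2 ≤ m) {a b : GaloisField 2 m} (ha : a ∈ Ups1 m)
    (h : Tr m (a * b) = 1) : weight m a b = 2 ^ (m - 1) * 2 ^ (m - 1) := by
  obtain ⟨r, hr0, hr1, rfl⟩ := ha
  have key := weight_add_inv hm hr0 hr1 b
  rw [Tr_add_inv_mul] at h
  rcases (Tr m (b * r)).eq_zero_or_eq_one with h1 | h1 <;>
    rcases (Tr m (b * r⁻¹)).eq_zero_or_eq_one with h2 | h2 <;>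
    simp_all [CharTwo.add_self_eq_zero]

theorem weight_of_mem_Ups1_of_Tr_eq_zero (hm : 2 ≤ m) {a b : GaloisField 2 m} (ha : a ∈ Ups1 m)
    (h : Tr m (a * b) = 0) :
    weight m a b = 2 ^ (m - 1) * (2 ^ (m - 1) - 1) ∨
      weight m a b = 2 ^ (m - 1) * (2 ^ (m - 1) + 1) := by
  obtain ⟨r, hr0, hr1, rfl⟩ := ha
  have key := weight_add_inv hm hr0 hr1 b
  rw [Tr_add_inv_mul, CharTwo.add_eq_zero] at h
  rw [Nat.mul_sub_one, mul_add_one]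
  rcases (Tr m (b * r⁻¹)).eq_zero_or_eq_one with h2 | h2 <;>
    simp only [h, h2, zero_ne_one, if_true, if_false, add_zero] at key
  · exact .inl (Nat.eq_sub_of_add_eq key)
  · exact .inr (Nat.add_right_cancel key)

end Weight

theorem stmt10 (m : ℕ) (hm : 2 ≤ m) (a b : GaloisField 2 m) (hab : (a, b) ≠ (0, 0)) :
    let wt : ℕ := (Finset.univ.filter (fun p : GaloisField 2 m × GaloisField 2 m =>
      p.1 ≠ 0 ∧ Tr m (p.2 * p.1 ^ 2 + p.2) = 0 ∧
        Tr m (a * p.1 * p.2 + b * p.1) = 1)).card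
    ((a = 0 ∧ b ≠ 0 ∧ Tr m b = 0) ∨ (a ∉ Ups1 m ∧ a ≠ 0) ∨
        (a ∈ Ups1 m ∧ b ≠ 0 ∧ Tr m (a * b) = 1) →
      wt = 2 ^ (2 * m - 2)) ∧
    (¬((a = 0 ∧ b ≠ 0 ∧ Tr m b = 0) ∨ (a ∉ Ups1 m ∧ a ≠ 0) ∨
        (a ∈ Ups1 m ∧ b ≠ 0 ∧ Tr m (a * b) = 1)) →
      wt = 2 ^ (m - 1) * (2 ^ (m - 1) - 1) ∨ wt = 2 ^ (m - 1) * (2 ^ (m - 1) + 1)) := by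
  intro wt
  change (_ → weight m a b = _) ∧ (_ → weight m a b = _ ∨ weight m a b = _)
  rw [show 2 ^ (2 * m - 2) = 2 ^ (m - 1) * 2 ^ (m - 1) by rw [← pow_add]; congr 1; omega]
  rcases eq_or_ne a 0 with rfl | ha0
  · have hb : b ≠ 0 := fun hb => hab (by rw [hb])
    rw [weight_zero_left (by omega) hb]
    rcases (Tr m b).eq_zero_or_eq_one with h | h <;>
      simp [h, hb, zero_notMem_Ups1, mul_add_one]
  by_cases ha : a ∈ Ups1 m
  · rcases (Tr m (a * b)).eq_zero_or_eq_one with h | h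
    · simp [weight_of_mem_Ups1_of_Tr_eq_zero hm ha h, ha, ha0, h]
    · simp [weight_of_mem_Ups1_of_Tr_eq_one hm ha h, ha, h, ne_zero_of_Tr_mul_eq_one h]
  · simp [weight_of_notMem_Ups1 hm ha0 ha b, ha, ha0]
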